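/- arXiv:1711.08918 — 5 statements merged into one kernel-verified Lean document; each statement's English description precedes it below -/
import Mathlib

section
/- Suppose (X,d,μ) is a metric measure space and p_t(x,y) is a heat kernel satisfying the lower bound p_t(x,y) ≥ t^{−α/β} Φ₁(d(x,y) t^{−1/β}) with Φ₁(1) > 0, and the stochastic bound ∫ p_t(x,y) dμ(y) ≤ 1 for all x, t. Then μ(D(x,r)) ≤ c_μ r^α for all x ∈ X and r > 0, where c_μ := Φ₁(1)^{-1} and D(x,r) is the open ball of radius r. -/
open MeasureTheory
open scoped ENNReal

theorem measure_le_inv_of_le_of_lintegral_le_one {Ω : Type*} [MeasurableSpace Ω]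
    {μ : Measure Ω} {s : Set Ω} {f : Ω → ℝ≥0∞} {c : ℝ≥0∞} (hs : MeasurableSet s)
    (hc : ∀ y ∈ s, c ≤ f y) (hf : ∫⁻ y, f y ∂μ ≤ 1) : μ s ≤ c⁻¹ := by
  rw [ENNReal.le_inv_iff_mul_le]
  calc μ s * c = ∫⁻ _ in s, c ∂μ := by rw [setLIntegral_const, mul_comm]
    _ ≤ ∫⁻ y in s, f y ∂μ := setLIntegral_mono' hs hc
    _ ≤ ∫⁻ y, f y ∂μ := setLIntegral_le_lintegral s f
    _ ≤ 1 := hf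

theorem Real.rpow_rpow_neg_div_self {r : ℝ} (hr : 0 ≤ r) (α : ℝ) {β : ℝ} (hβ : β ≠ 0) :
    (r ^ β) ^ (-(α / β)) = r ^ (-α) := by
  rw [← Real.rpow_mul hr]
  congr 1
  field_simp

theorem stmt_10_general {X : Type*} [MetricSpace X] [MeasurableSpace X] [BorelSpace X]
    (μ : Measure X) (α β : ℝ) (hβ : 0 < β)
    (Φ₁ : ℝ → ℝ) (hmono : AntitoneOn Φ₁ (Set.Ici 0)) (hΦ₁ : 0 < Φ₁ 1)
    (p : ℝ → X → X → ℝ≥0∞)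
    (hlow : ∀ t > (0 : ℝ), ∀ x y,
      ENNReal.ofReal (t ^ (-(α / β)) * Φ₁ (dist x y / t ^ (1 / β))) ≤ p t x y)
    (hstoch : ∀ x, ∀ t > (0 : ℝ), ∫⁻ y, p t x y ∂μ ≤ 1)
    (x : X) (r : ℝ) (hr : 0 < r) :
    μ (Metric.ball x r) ≤ ENNReal.ofReal ((Φ₁ 1)⁻¹ * r ^ α) := by
  have hball : ∀ y ∈ Metric.ball x r, ENNReal.ofReal (r ^ (-α) * Φ₁ 1) ≤ p (r ^ β) x y := by
    intro y hy
    have hdist : dist x y / r ≤ 1 := (div_le_one hr).2 (Metric.mem_ball'.1 hy).le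
    have hΦ : Φ₁ 1 ≤ Φ₁ (dist x y / r) :=
      hmono (Set.mem_Ici.2 (by positivity)) (Set.mem_Ici.2 zero_le_one) hdist
    calc ENNReal.ofReal (r ^ (-α) * Φ₁ 1)
        ≤ ENNReal.ofReal (r ^ (-α) * Φ₁ (dist x y / r)) := by gcongr
      _ = ENNReal.ofReal ((r ^ β) ^ (-(α / β)) * Φ₁ (dist x y / (r ^ β) ^ (1 / β))) := by
        rw [Real.rpow_rpow_neg_div_self hr.le α hβ.ne', one_div, Real.rpow_rpow_inv hr.le hβ.ne']
      _ ≤ p (r ^ β) x y := hlow _ (by positivity) x y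
  calc μ (Metric.ball x r) ≤ (ENNReal.ofReal (r ^ (-α) * Φ₁ 1))⁻¹ :=
        measure_le_inv_of_le_of_lintegral_le_one Metric.isOpen_ball.measurableSet hball
          (hstoch x _ (by positivity))
    _ = ENNReal.ofReal ((Φ₁ 1)⁻¹ * r ^ α) := by
        rw [← ENNReal.ofReal_inv_of_pos (by positivity), mul_inv, Real.rpow_neg hr.le, inv_inv,
          mul_comm]

/-- Volume estimate (7.7): if the heat kernel satisfies the lower bound
`p_t(x,y) ≥ t^{-α/β} Φ₁(d(x,y) t^{-1/β})` with `Φ₁(1) > 0` and the stochastic bound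
`∫ p_t(x,·) dμ ≤ 1`, then `μ(D(x,r)) ≤ Φ₁(1)⁻¹ r^α`. -/
theorem stmt_10 {X : Type*} [MetricSpace X] [MeasurableSpace X] [BorelSpace X]
    (μ : Measure X) (α β : ℝ) (hα : 0 < α) (hβ : 0 < β)
    (Φ₁ : ℝ → ℝ) (hmono : AntitoneOn Φ₁ (Set.Ici 0)) (hΦ₁ : 0 < Φ₁ 1)
    (p : ℝ → X → X → ℝ≥0∞)
    (hlow : ∀ t > (0 : ℝ), ∀ x y,
      ENNReal.ofReal (t ^ (-(α / β)) * Φ₁ (dist x y / t ^ (1 / β))) ≤ p t x y)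
    (hstoch : ∀ x, ∀ t > (0 : ℝ), ∫⁻ y, p t x y ∂μ ≤ 1)
    (x : X) (r : ℝ) (hr : 0 < r) :
    μ (Metric.ball x r) ≤ ENNReal.ofReal ((Φ₁ 1)⁻¹ * r ^ α) :=
  stmt_10_general μ α β hβ Φ₁ hmono hΦ₁ p hlow hstoch x r hr
end

section
/- In the same space-time setting with the lower heat-kernel bound p_t(x,y) ≥ t^{−α/β}Φ₁(d(x,y)t^{−1/β}) where Φ₁ is decreasing and Φ₁(1) > 0: choose η ∈ (0,1) with (3η)^{α/β} < Φ₁(1), and set κ := η^{α/β}. Then for all x' = (x,r) ∈ X × ℝ and ρ > 0, setting z' := (x, r + 2η ρ^{β/α}), the cylinder Z_β(x', (κρ)^{1/α}) is contained in the G'-ball B(z', ρ). -/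
/-! With `T := η ρ^{β/α}` the cylinder has time radius `T` and space radius `T^{1/β}`, and the pole
`z'` sits `2T` later than `x'`, so for `(y,s)` in the cylinder the elapsed time `t` lies in
`(T, 3T)`. Hence `d(x,y) < t^{1/β}`, and since `Φ₁` is decreasing the lower bound gives
`p_t(x,y) ≥ t^{-α/β} Φ₁(1) > (3T)^{-α/β} (3η)^{α/β} = 1/ρ`. -/

open scoped ENNReal

/-- The space-time Green function `G'((x,r),(y,s)) = p_{r-s}(x,y)` for `r > s`, else `0`. -/
noncomputable def Gst {X : Type*} (p : ℝ → X → X → ℝ≥0∞) (x' y' : X × ℝ) : ℝ≥0∞ :=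
  if y'.2 < x'.2 then p (x'.2 - y'.2) x'.1 y'.1 else 0

lemma Gst_of_lt {X : Type*} (p : ℝ → X → X → ℝ≥0∞) {x y : X} {r s : ℝ} (h : s < r) :
    Gst p (x, r) (y, s) = p (r - s) x y :=
  if_pos h

lemma ofReal_rpow_neg_mul_le_of_dist_le {X : Type*} [PseudoMetricSpace X] {γ β : ℝ} {Φ : ℝ → ℝ}
    (hΦ : AntitoneOn Φ (Set.Ici 0)) {p : ℝ → X → X → ℝ≥0∞}
    (hlow : ∀ t > (0 : ℝ), ∀ x y,
      ENNReal.ofReal (t ^ (-γ) * Φ (dist x y / t ^ (1 / β))) ≤ p t x y)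
    {t : ℝ} (ht : 0 < t) {x y : X} (hxy : dist x y ≤ t ^ (1 / β)) :
    ENNReal.ofReal (t ^ (-γ) * Φ 1) ≤ p t x y := by
  have hσ : dist x y / t ^ (1 / β) ≤ 1 := div_le_one_of_le₀ hxy (Real.rpow_nonneg ht.le _)
  refine le_trans (ENNReal.ofReal_le_ofReal ?_) (hlow t ht x y)
  exact mul_le_mul_of_nonneg_left
    (hΦ (Set.mem_Ici.2 (by positivity)) (Set.mem_Ici.2 zero_le_one) hσ) (by positivity)

lemma rpow_div_mul_rpow_one_div {α β : ℝ} (hα : α ≠ 0) (hβ : β ≠ 0) {η ρ : ℝ} (hη : 0 ≤ η)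
    (hρ : 0 ≤ ρ) : (η ^ (α / β) * ρ) ^ (1 / α) = (η * ρ ^ (β / α)) ^ (1 / β) := by
  rw [Real.mul_rpow (by positivity) hρ, Real.mul_rpow hη (by positivity),
    ← Real.rpow_mul hη, ← Real.rpow_mul hρ]
  congr 2 <;> field_simp

lemma inv_lt_rpow_neg_mul {α β : ℝ} (hα : 0 < α) (hβ : 0 < β) {a ρ t c : ℝ} (ha : 0 < a)
    (hρ : 0 < ρ) (ht : 0 < t) (hta : t < a * ρ ^ (β / α)) (hc : a ^ (α / β) < c) :
    ρ⁻¹ < t ^ (-(α / β)) * c := by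
  have hscale : (a * ρ ^ (β / α)) ^ (α / β) = a ^ (α / β) * ρ := by
    rw [Real.mul_rpow ha.le (by positivity), ← Real.rpow_mul hρ.le,
      show β / α * (α / β) = 1 by field_simp, Real.rpow_one]
  have htγ : t ^ (α / β) < a ^ (α / β) * ρ :=
    hscale ▸ Real.rpow_lt_rpow ht.le hta (by positivity)
  rw [Real.rpow_neg ht.le, inv_mul_eq_div, lt_div_iff₀ (by positivity)]
  calc ρ⁻¹ * t ^ (α / β) < ρ⁻¹ * (a ^ (α / β) * ρ) := by gcongr
    _ = a ^ (α / β) := by field_simp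
    _ < c := hc

theorem stmt_15_general {X : Type*} [MetricSpace X] (α β : ℝ) (hα : 0 < α) (hβ : 0 < β)
    (Φ₁ : ℝ → ℝ) (hmono : AntitoneOn Φ₁ (Set.Ici 0))
    (p : ℝ → X → X → ℝ≥0∞)
    (hlow : ∀ t > (0 : ℝ), ∀ x y,
      ENNReal.ofReal (t ^ (-(α / β)) * Φ₁ (dist x y / t ^ (1 / β))) ≤ p t x y)
    (η : ℝ) (hη0 : 0 < η) (hηΦ : (3 * η) ^ (α / β) < Φ₁ 1)
    (x : X) (r : ℝ) (ρ : ℝ) (hρ : 0 < ρ) (y : X) (s : ℝ)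
    (hZ1 : dist x y < (η ^ (α / β) * ρ) ^ (1 / α))
    (hZ2 : |r - s| < ((η ^ (α / β) * ρ) ^ (1 / α)) ^ β) :
    (ENNReal.ofReal ρ)⁻¹ < Gst p (x, r + 2 * η * ρ ^ (β / α)) (y, s) := by
  have hT : 0 < η * ρ ^ (β / α) := by positivity
  rw [rpow_div_mul_rpow_one_div hα.ne' hβ.ne' hη0.le hρ.le] at hZ1 hZ2
  rw [one_div, Real.rpow_inv_rpow hT.le hβ.ne'] at hZ2
  obtain ⟨hsr, hrs⟩ := abs_lt.1 hZ2
  have ht : η * ρ ^ (β / α) < r + 2 * η * ρ ^ (β / α) - s := by linarith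
  rw [Gst_of_lt p (by linarith)]
  calc (ENNReal.ofReal ρ)⁻¹ = ENNReal.ofReal ρ⁻¹ := (ENNReal.ofReal_inv_of_pos hρ).symm
    _ < ENNReal.ofReal ((r + 2 * η * ρ ^ (β / α) - s) ^ (-(α / β)) * Φ₁ 1) := by
      refine (ENNReal.ofReal_lt_ofReal_iff_of_nonneg (inv_nonneg.2 hρ.le)).2 ?_
      exact inv_lt_rpow_neg_mul hα hβ (by positivity) hρ (hT.trans ht) (by linarith) hηΦ
    _ ≤ _ := ofReal_rpow_neg_mul_le_of_dist_le hmono hlow (hT.trans ht)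
      (hZ1.le.trans (Real.rpow_le_rpow hT.le ht.le (by positivity)))

/-- Proposition 7.10: under the lower heat-kernel bound, with `η ∈ (0,1)`,
`(3η)^{α/β} < Φ₁(1)` and `κ = η^{α/β}`, the cylinder `Z_β(x',(κρ)^{1/α})` is contained
in the `G'`-ball `B(z',ρ)` with `z' = (x, r + 2η ρ^{β/α})`. -/
theorem stmt_15 {X : Type*} [MetricSpace X] (α β : ℝ) (hα : 0 < α) (hβ : 0 < β)
    (Φ₁ : ℝ → ℝ) (hmono : AntitoneOn Φ₁ (Set.Ici 0)) (hΦ₁ : 0 < Φ₁ 1)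
    (p : ℝ → X → X → ℝ≥0∞)
    (hlow : ∀ t > (0 : ℝ), ∀ x y,
      ENNReal.ofReal (t ^ (-(α / β)) * Φ₁ (dist x y / t ^ (1 / β))) ≤ p t x y)
    (η : ℝ) (hη0 : 0 < η) (hη1 : η < 1) (hηΦ : (3 * η) ^ (α / β) < Φ₁ 1)
    (x : X) (r : ℝ) (ρ : ℝ) (hρ : 0 < ρ) (y : X) (s : ℝ)
    (hZ1 : dist x y < (η ^ (α / β) * ρ) ^ (1 / α))
    (hZ2 : |r - s| < ((η ^ (α / β) * ρ) ^ (1 / α)) ^ β) :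
    (ENNReal.ofReal ρ)⁻¹ < Gst p (x, r + 2 * η * ρ ^ (β / α)) (y, s) :=
  stmt_15_general α β hα hβ Φ₁ hmono p hlow η hη0 hηΦ x r ρ hρ y s hZ1 hZ2
end

section
/- Combining the two inclusions: there exist constants C, κ > 0 such that κ · m_{G'}(A) ≤ m_{α,β}(A) ≤ C · m_{G'}(A) for every A ⊆ X × ℝ, where m_{α,β} is the anisotropic Hausdorff measure defined via cylinders Z_β(x',ρ) with gauge ρ^α, and m_{G'} is the intrinsic Hausdorff measure defined via G'-balls with gauge ρ. -/
/-!
Both measures are Hausdorff-type measures built from coverings, so it suffices to compare the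
covering sets: a set of one family of radius `ρ` lies in a set of the other family of radius
`c ρ^{η₁/η₂}`, which transfers coverings while multiplying the gauges by `c^{η₂}`.
The lower heat kernel bound puts the cylinder `Z_β((x,r),ρ)` inside the `G'`-ball of radius
`≍ ρ^α` centred at the later time `r + 2ρ^β`; the upper bound, through
`σ^α Φ₂(σ) ≤ M` and `Φ₂ ≤ Φ₂(0)`, puts the `G'`-ball of radius `ρ` inside a cylinder of radius
`≍ ρ^{1/α}` with the same centre.
-/

open scoped ENNReal

/-- The Hausdorff-type premeasure `m_{η,F}^δ`. -/
noncomputable def mdel {X : Type*} (F : X → ℝ → Set X) (η δ : ℝ) (A : Set X) : ℝ≥0∞ :=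
  ⨅ (c : ℕ → X × ℝ) (_ : A ⊆ ⋃ j, F (c j).1 (c j).2)
    (_ : ∀ j, 0 < (c j).2 ∧ (c j).2 < δ), ∑' j, ENNReal.ofReal ((c j).2 ^ η)

/-- The Hausdorff-type measure `m_{η,F} = lim_{δ→0} m_{η,F}^δ`. -/
noncomputable def mH {X : Type*} (F : X → ℝ → Set X) (η : ℝ) (A : Set X) : ℝ≥0∞ :=
  ⨆ (δ : ℝ) (_ : 0 < δ), mdel F η δ A

/-- The `G'`-ball `B(x',ρ) = {y' : G'(x',y') > 1/ρ}`. -/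
def GstBall {X : Type*} (p : ℝ → X → X → ℝ≥0∞) (x' : X × ℝ) (ρ : ℝ) : Set (X × ℝ) :=
  {y' | (ENNReal.ofReal ρ)⁻¹ < Gst p x' y'}

/-- The cylinder `Z_β((x,r),ρ) = {(y,s) : d(x,y) < ρ, |r - s| < ρ^β}`. -/
def Zcyl {X : Type*} [MetricSpace X] (β : ℝ) (x' : X × ℝ) (ρ : ℝ) : Set (X × ℝ) :=
  {y' | dist x'.1 y'.1 < ρ ∧ |x'.2 - y'.2| < ρ ^ β}

open Real Set

section Comparison

variable {X : Type*} {F G : X → ℝ → Set X} {η₁ η₂ c : ℝ}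

lemma mdel_le_mul_mdel (hη₂ : η₂ ≠ 0) (hc : 0 < c) (T : X → ℝ → X)
    (hincl : ∀ x ρ, 0 < ρ → F x ρ ⊆ G (T x ρ) (c * ρ ^ (η₁ / η₂)))
    {δ δ' : ℝ} (hδ : ∀ ρ, 0 < ρ → ρ < δ' → c * ρ ^ (η₁ / η₂) < δ) (A : Set X) :
    mdel G η₂ δ A ≤ ENNReal.ofReal (c ^ η₂) * mdel F η₁ δ' A := by
  conv_rhs => rw [mdel]
  simp only [ENNReal.mul_iInf_of_ne (ENNReal.ofReal_pos.2 (rpow_pos_of_pos hc η₂)).ne'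
    ENNReal.ofReal_ne_top, le_iInf_iff]
  intro cov hcov hrad
  let cov' : ℕ → X × ℝ := fun j => (T (cov j).1 (cov j).2, c * (cov j).2 ^ (η₁ / η₂))
  have hcov' : A ⊆ ⋃ j, G (cov' j).1 (cov' j).2 :=
    hcov.trans (iUnion_mono fun j => hincl _ _ (hrad j).1)
  have hrad' : ∀ j, 0 < (cov' j).2 ∧ (cov' j).2 < δ := fun j =>
    ⟨mul_pos hc (rpow_pos_of_pos (hrad j).1 _), hδ _ (hrad j).1 (hrad j).2⟩
  calc mdel G η₂ δ A ≤ ∑' j, ENNReal.ofReal ((cov' j).2 ^ η₂) :=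
        iInf_le_of_le cov' (iInf_le_of_le hcov' (iInf_le _ hrad'))
    _ = ENNReal.ofReal (c ^ η₂) * ∑' j, ENNReal.ofReal ((cov j).2 ^ η₁) := by
        rw [← ENNReal.tsum_mul_left]
        refine tsum_congr fun j => ?_
        have hr := (hrad j).1.le
        rw [← ENNReal.ofReal_mul (rpow_nonneg hc.le _), mul_rpow hc.le (rpow_nonneg hr _),
          ← rpow_mul hr, div_mul_cancel₀ _ hη₂]

/-- Proposition 2.1 of the paper. -/
lemma mH_le_mul_mH (hη₁ : 0 < η₁) (hη₂ : 0 < η₂) (hc : 0 < c) (T : X → ℝ → X)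
    (hincl : ∀ x ρ, 0 < ρ → F x ρ ⊆ G (T x ρ) (c * ρ ^ (η₁ / η₂))) (A : Set X) :
    mH G η₂ A ≤ ENNReal.ofReal (c ^ η₂) * mH F η₁ A := by
  refine iSup₂_le fun δ hδ => ?_
  have hδc : 0 < δ / c := div_pos hδ hc
  set δ' := (δ / c) ^ (η₂ / η₁)
  have hδ' : ∀ ρ, 0 < ρ → ρ < δ' → c * ρ ^ (η₁ / η₂) < δ := fun ρ hρ hρδ' => by
    have hpow : ρ ^ (η₁ / η₂) < δ' ^ (η₁ / η₂) :=
      rpow_lt_rpow hρ.le hρδ' (div_pos hη₁ hη₂)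
    rw [← rpow_mul hδc.le, div_mul_div_comm, mul_comm η₂, div_self (by positivity),
      rpow_one] at hpow
    calc c * ρ ^ (η₁ / η₂) < c * (δ / c) := mul_lt_mul_of_pos_left hpow hc
      _ = δ := mul_div_cancel₀ δ hc.ne'
  exact (mdel_le_mul_mdel hη₂.ne' hc T hincl hδ' A).trans
    (mul_le_mul_right (le_iSup₂ (f := fun δ (_ : 0 < δ) => mdel F η₁ δ A) δ'
      (rpow_pos_of_pos hδc _)) _)

end Comparison

lemma mem_GstBall {X : Type*} {p : ℝ → X → X → ℝ≥0∞} {x' y' : X × ℝ} {ρ : ℝ} :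
    y' ∈ GstBall p x' ρ ↔ y'.2 < x'.2 ∧ (ENNReal.ofReal ρ)⁻¹ < p (x'.2 - y'.2) x'.1 y'.1 := by
  simp only [GstBall, Gst, mem_ofPred_eq]
  split_ifs with h <;> simp [h]

lemma nonneg_of_forall_rpow_mul_le {α M : ℝ} {Φ : ℝ → ℝ} (hα : 0 < α)
    (hM : ∀ σ ≥ (0 : ℝ), σ ^ α * Φ σ ≤ M) : 0 ≤ M := by
  simpa [zero_rpow hα.ne'] using hM 0 le_rfl

section HeatKernel

variable {X : Type*} [MetricSpace X] {α β M : ℝ} {Φ₁ Φ₂ : ℝ → ℝ} {p : ℝ → X → X → ℝ≥0∞}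

lemma Zcyl_subset_GstBall (hα : 0 < α) (hβ : 0 < β) (hmono₁ : AntitoneOn Φ₁ (Ici 0))
    (hΦ₁ : 0 < Φ₁ 1)
    (hlow : ∀ t > (0 : ℝ), ∀ x y,
      ENNReal.ofReal (t ^ (-(α / β)) * Φ₁ (dist x y / t ^ (1 / β))) ≤ p t x y)
    (x' : X × ℝ) {ρ : ℝ} (hρ : 0 < ρ) :
    Zcyl β x' ρ ⊆ GstBall p (x'.1, x'.2 + 2 * ρ ^ β) (3 ^ (α / β) / Φ₁ 1 * ρ ^ α) := by
  obtain ⟨x, r⟩ := x'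
  rintro ⟨y, s⟩ ⟨hd, hrs⟩
  have hρβ : 0 < ρ ^ β := rpow_pos_of_pos hρ β
  obtain ⟨hrs₁, hrs₂⟩ := abs_lt.1 hrs
  set t := r + 2 * ρ ^ β - s
  have ht₁ : ρ ^ β < t := by simp only at hrs₁; linarith
  have ht₃ : t < 3 * ρ ^ β := by simp only at hrs₂; linarith
  have ht : 0 < t := hρβ.trans ht₁
  have hσ : dist x y / t ^ (1 / β) ≤ 1 := by
    rw [div_le_one (rpow_pos_of_pos ht _)]
    calc dist x y ≤ ρ := hd.le
      _ = (ρ ^ β) ^ (1 / β) := by rw [← rpow_mul hρ.le, mul_one_div_cancel hβ.ne', rpow_one]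
      _ ≤ t ^ (1 / β) := rpow_le_rpow hρβ.le ht₁.le (by positivity)
  have htpow : t ^ (α / β) < 3 ^ (α / β) * ρ ^ α := by
    calc t ^ (α / β) < (3 * ρ ^ β) ^ (α / β) := rpow_lt_rpow ht.le ht₃ (div_pos hα hβ)
      _ = 3 ^ (α / β) * ρ ^ α := by
        rw [mul_rpow (by norm_num) hρβ.le, ← rpow_mul hρ.le, mul_div_cancel₀ _ hβ.ne']
  have hgauge : (3 ^ (α / β) / Φ₁ 1 * ρ ^ α)⁻¹ < t ^ (-(α / β)) * Φ₁ 1 := by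
    rw [rpow_neg ht.le, inv_mul_eq_div, div_mul_eq_mul_div, inv_div]
    exact div_lt_div_of_pos_left hΦ₁ (rpow_pos_of_pos ht _) htpow
  rw [mem_GstBall]
  refine ⟨by simp only; linarith, ?_⟩
  rw [← ENNReal.ofReal_inv_of_pos (by positivity)]
  refine lt_of_lt_of_le ?_ (hlow t ht x y)
  rw [ENNReal.ofReal_lt_ofReal_iff_of_nonneg (by positivity)]
  refine hgauge.trans_le (mul_le_mul_of_nonneg_left ?_ (rpow_nonneg ht.le _))
  exact hmono₁ (mem_Ici.2 (by positivity)) (mem_Ici.2 zero_le_one) hσ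

lemma rpow_lt_mul_of_mem_GstBall
    (hup : ∀ t > (0 : ℝ), ∀ x y,
      p t x y ≤ ENNReal.ofReal (t ^ (-(α / β)) * Φ₂ (dist x y / t ^ (1 / β))))
    {x' y' : X × ℝ} {ρ : ℝ} (hρ : 0 < ρ) (hy : y' ∈ GstBall p x' ρ) :
    0 < x'.2 - y'.2 ∧ (x'.2 - y'.2) ^ (α / β) <
      ρ * Φ₂ (dist x'.1 y'.1 / (x'.2 - y'.2) ^ (1 / β)) := by
  obtain ⟨hsr, hlt⟩ := mem_GstBall.1 hy
  have ht : 0 < x'.2 - y'.2 := sub_pos.2 hsr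
  have h := hlt.trans_le (hup _ ht _ _)
  rw [← ENNReal.ofReal_inv_of_pos hρ, ENNReal.ofReal_lt_ofReal_iff', rpow_neg ht.le,
    inv_mul_eq_div, lt_div_iff₀ (rpow_pos_of_pos ht _), inv_mul_lt_iff₀ hρ] at h
  exact ⟨ht, h.1⟩

lemma GstBall_subset_Zcyl (hα : 0 < α) (hβ : 0 < β) (hmono₂ : AntitoneOn Φ₂ (Ici 0))
    (hM : ∀ σ ≥ (0 : ℝ), σ ^ α * Φ₂ σ ≤ M)
    (hup : ∀ t > (0 : ℝ), ∀ x y,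
      p t x y ≤ ENNReal.ofReal (t ^ (-(α / β)) * Φ₂ (dist x y / t ^ (1 / β))))
    {c : ℝ} (hMc : M < c) (hΦc : Φ₂ 0 ≤ c) (x' : X × ℝ) {ρ : ℝ} (hρ : 0 < ρ) :
    GstBall p x' ρ ⊆ Zcyl β x' ((c * ρ) ^ α⁻¹) := by
  intro y' hy
  obtain ⟨ht, hlt⟩ := rpow_lt_mul_of_mem_GstBall hup hρ hy
  set t := x'.2 - y'.2
  set σ := dist x'.1 y'.1 / t ^ (1 / β)
  have hσ : 0 ≤ σ := by positivity
  have hcρ : 0 ≤ c * ρ := mul_nonneg ((nonneg_of_forall_rpow_mul_le hα hM).trans hMc.le) hρ.le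
  constructor
  · rw [lt_rpow_inv_iff_of_pos dist_nonneg hcρ hα]
    calc dist x'.1 y'.1 ^ α = σ ^ α * t ^ (α / β) := by
          rw [div_rpow dist_nonneg (rpow_nonneg ht.le _), ← rpow_mul ht.le, one_div_mul_eq_div,
            div_mul_cancel₀ _ (rpow_pos_of_pos ht _).ne']
      _ ≤ σ ^ α * (ρ * Φ₂ σ) := mul_le_mul_of_nonneg_left hlt.le (rpow_nonneg hσ _)
      _ = ρ * (σ ^ α * Φ₂ σ) := by ring
      _ ≤ ρ * M := mul_le_mul_of_nonneg_left (hM σ hσ) hρ.le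
      _ < c * ρ := by rw [mul_comm]; exact mul_lt_mul_of_pos_right hMc hρ
  · rw [abs_of_pos ht, ← rpow_mul hcρ, inv_mul_eq_div, ← inv_div,
      lt_rpow_inv_iff_of_pos ht.le hcρ (div_pos hα hβ)]
    calc t ^ (α / β) < ρ * Φ₂ σ := hlt
      _ ≤ ρ * Φ₂ 0 := mul_le_mul_of_nonneg_left (hmono₂ self_mem_Ici hσ hσ) hρ.le
      _ ≤ c * ρ := by rw [mul_comm]; exact mul_le_mul_of_nonneg_right hΦc hρ.le

end HeatKernel

theorem stmt_16_general {X : Type*} [MetricSpace X] (α β : ℝ) (hα : 0 < α) (hβ : 0 < β)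
    (Φ₁ Φ₂ : ℝ → ℝ) (hmono₁ : AntitoneOn Φ₁ (Set.Ici 0))
    (hmono₂ : AntitoneOn Φ₂ (Set.Ici 0))
    (hΦ₁ : 0 < Φ₁ 1) (M : ℝ) (hM : ∀ σ ≥ (0 : ℝ), σ ^ α * Φ₂ σ ≤ M)
    (p : ℝ → X → X → ℝ≥0∞)
    (hlow : ∀ t > (0 : ℝ), ∀ x y,
      ENNReal.ofReal (t ^ (-(α / β)) * Φ₁ (dist x y / t ^ (1 / β))) ≤ p t x y)
    (hup : ∀ t > (0 : ℝ), ∀ x y,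
      p t x y ≤ ENNReal.ofReal (t ^ (-(α / β)) * Φ₂ (dist x y / t ^ (1 / β)))) :
    ∃ C κ : ℝ, 0 < C ∧ 0 < κ ∧ ∀ A : Set (X × ℝ),
      ENNReal.ofReal κ * mH (GstBall p) 1 A ≤ mH (Zcyl β) α A ∧
      mH (Zcyl β) α A ≤ ENNReal.ofReal C * mH (GstBall p) 1 A := by
  set κ : ℝ := 3 ^ (α / β) / Φ₁ 1
  set C : ℝ := max M (Φ₂ 0) + 1
  have hκ : 0 < κ := by positivity
  have hC : 0 < C := by
    linarith [le_max_left M (Φ₂ 0), nonneg_of_forall_rpow_mul_le hα hM]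
  refine ⟨C, κ⁻¹, hC, inv_pos.2 hκ, fun A => ⟨?_, ?_⟩⟩
  · have h := mH_le_mul_mH (F := Zcyl β) (G := GstBall p) hα one_pos hκ
      (fun x' ρ => (x'.1, x'.2 + 2 * ρ ^ β))
      (fun x' _ hρ => by simpa only [div_one] using
        Zcyl_subset_GstBall hα hβ hmono₁ hΦ₁ hlow x' hρ) A
    rw [rpow_one] at h
    calc ENNReal.ofReal κ⁻¹ * mH (GstBall p) 1 A
        ≤ ENNReal.ofReal κ⁻¹ * (ENNReal.ofReal κ * mH (Zcyl β) α A) := mul_le_mul_right h _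
      _ = mH (Zcyl β) α A := by
        rw [← mul_assoc, ← ENNReal.ofReal_mul (inv_nonneg.2 hκ.le), inv_mul_cancel₀ hκ.ne',
          ENNReal.ofReal_one, one_mul]
  · have h := mH_le_mul_mH (F := GstBall p) (G := Zcyl β) one_pos hα (rpow_pos_of_pos hC α⁻¹)
      (fun x' _ => x') (fun x' ρ hρ => by
        rw [one_div, ← mul_rpow hC.le hρ.le]
        exact GstBall_subset_Zcyl hα hβ hmono₂ hM hup (by linarith [le_max_left M (Φ₂ 0)])
          (by linarith [le_max_right M (Φ₂ 0)]) x' hρ) A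
    rwa [rpow_inv_rpow hC.le hα.ne'] at h

/-- Comparison of the intrinsic Hausdorff measure `m_{G'}` with the anisotropic Hausdorff
measure `m_{α,β}`: there are constants `C, κ > 0` with
`κ m_{G'}(A) ≤ m_{α,β}(A) ≤ C m_{G'}(A)` for every `A ⊆ X × ℝ`. -/
theorem stmt_16 {X : Type*} [MetricSpace X] (α β : ℝ) (hα : 0 < α) (hβ : 0 < β)
    (Φ₁ Φ₂ : ℝ → ℝ) (hmono₁ : AntitoneOn Φ₁ (Set.Ici 0))
    (hmono₂ : AntitoneOn Φ₂ (Set.Ici 0)) (hpos₂ : ∀ σ ≥ (0 : ℝ), 0 ≤ Φ₂ σ)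
    (hΦ₁ : 0 < Φ₁ 1) (M : ℝ) (hM : ∀ σ ≥ (0 : ℝ), σ ^ α * Φ₂ σ ≤ M)
    (p : ℝ → X → X → ℝ≥0∞)
    (hlow : ∀ t > (0 : ℝ), ∀ x y,
      ENNReal.ofReal (t ^ (-(α / β)) * Φ₁ (dist x y / t ^ (1 / β))) ≤ p t x y)
    (hup : ∀ t > (0 : ℝ), ∀ x y,
      p t x y ≤ ENNReal.ofReal (t ^ (-(α / β)) * Φ₂ (dist x y / t ^ (1 / β)))) :
    ∃ C κ : ℝ, 0 < C ∧ 0 < κ ∧ ∀ A : Set (X × ℝ),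
      ENNReal.ofReal κ * mH (GstBall p) 1 A ≤ mH (Zcyl β) α A ∧
      mH (Zcyl β) α A ≤ ENNReal.ofReal C * mH (GstBall p) 1 A :=
  stmt_16_general α β hα hβ Φ₁ Φ₂ hmono₁ hmono₂ hΦ₁ M hM p hlow hup
end

section
/- For the heat equation on ℝ^{n+1} with Green function G(x',y') := G_0(x'−y') (Gauss–Weierstrass kernel G_0(x,t) = 1_{t>0} t^{-n/2} e^{-|x|²/(4t)}), the intrinsic Hausdorff measure m_G and the parabolic Hausdorff-type measure m_{n,P} (using boxes P(x',ρ) = x' + [−ρ/2,ρ/2]ⁿ × [−ρ²/2,ρ²/2] with gauge ρⁿ) satisfy m_{n,P}(A) ≤ 2ⁿ n^{n/2} m_G(A) and m_G(A) ≤ 2^{n/2} m_{n,P}(A) for every A ⊆ ℝ^{n+1}. -/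
/-!
A heat ball `B(x', ρ)` is a superlevel set of `G₀`: its points have time lag `0 < t < ρ^{2/n}`
and, taking logarithms and using `log u ≤ u / e`, spatial lag `|x|² ≤ n ρ^{2/n}`, so it lies in
the box `P(x', 2 √n ρ^{1/n})`, whose gauge is `2ⁿ n^{n/2} ρ`. Conversely, seen from the point
`x' + (0, ρ²)`, the box `P(x', ρ)` has time lags in `[ρ²/2, 3ρ²/2]` and `|x|²/(4t) ≤ n/8`, so
`G₀ > (2ρ²)^{-n/2}` there because `(3/2) e^{1/4} < 2`: the box lies in a heat ball of radius
`2^{n/2} ρⁿ`. Replacing every set of a fine cover by the enclosing set of the other family gives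
a fine cover whose gauge sum grows at most by the constant.
-/

open scoped ENNReal

/-- The Gauss–Weierstrass kernel `G₀(x,t) = 1_{t>0} t^{-n/2} exp(-|x|²/(4t))`. -/
noncomputable def G0 (n : ℕ) (x : EuclideanSpace ℝ (Fin n)) (t : ℝ) : ℝ :=
  if 0 < t then t ^ (-(n : ℝ) / 2) * Real.exp (-‖x‖ ^ 2 / (4 * t)) else 0

/-- The Green function of the heat equation: `G(x',y') = G₀(x' - y')`. -/
noncomputable def Gheat (n : ℕ) (x' y' : EuclideanSpace ℝ (Fin n) × ℝ) : ℝ :=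
  G0 n (x'.1 - y'.1) (x'.2 - y'.2)

/-- The heat ball `B(x',ρ) = {y' : G(x',y') > 1/ρ}`. -/
def heatBall (n : ℕ) (x' : EuclideanSpace ℝ (Fin n) × ℝ) (ρ : ℝ) :
    Set (EuclideanSpace ℝ (Fin n) × ℝ) :=
  {y' | 1 / ρ < Gheat n x' y'}

/-- The parabolic box `P(x',ρ) = x' + [-ρ/2,ρ/2]ⁿ × [-ρ²/2,ρ²/2]`. -/
def parBox (n : ℕ) (x' : EuclideanSpace ℝ (Fin n) × ℝ) (ρ : ℝ) :
    Set (EuclideanSpace ℝ (Fin n) × ℝ) :=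
  {y' | (∀ i, |y'.1 i - x'.1 i| ≤ ρ / 2) ∧ |y'.2 - x'.2| ≤ ρ ^ 2 / 2}

open Set Filter Topology

section Comparison

variable {X : Type*} {F G : X → ℝ → Set X} {η θ C : ℝ} {A : Set X}

theorem mdel_le_tsum {δ : ℝ} (c : ℕ → X × ℝ) (hA : A ⊆ ⋃ j, F (c j).1 (c j).2)
    (hc : ∀ j, (c j).2 ∈ Ioo 0 δ) :
    mdel F η δ A ≤ ∑' j, ENNReal.ofReal ((c j).2 ^ η) :=
  iInf_le_of_le c <| iInf_le_of_le hA <| iInf_le_of_le hc le_rfl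

theorem mdel_le_ofReal_mul_mdel {r : ℝ → ℝ} {δ δ' : ℝ} (hC : 0 < C)
    (hsub : ∀ x ρ, 0 < ρ → ∃ x', G x ρ ⊆ F x' (r ρ))
    (hr : ∀ ρ ∈ Ioo 0 δ, r ρ ∈ Ioo 0 δ') (hcost : ∀ ρ, 0 < ρ → r ρ ^ η ≤ C * ρ ^ θ) :
    mdel F η δ' A ≤ ENNReal.ofReal C * mdel G θ δ A := by
  choose φ hφ using hsub
  have hC₀ : ENNReal.ofReal C ≠ 0 := ENNReal.ofReal_ne_zero_iff.2 hC
  rw [mul_comm, ← ENNReal.div_le_iff hC₀ ENNReal.ofReal_ne_top]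
  refine le_iInf fun c => le_iInf₂ fun hA hc => ?_
  rw [ENNReal.div_le_iff hC₀ ENNReal.ofReal_ne_top, mul_comm]
  let c' : ℕ → X × ℝ := fun j => (φ (c j).1 (c j).2 (hc j).1, r (c j).2)
  calc mdel F η δ' A ≤ ∑' j, ENNReal.ofReal ((c' j).2 ^ η) :=
        mdel_le_tsum c' (hA.trans <| iUnion_mono fun j => hφ _ _ (hc j).1) fun j => hr _ (hc j)
    _ ≤ ∑' j, ENNReal.ofReal C * ENNReal.ofReal ((c j).2 ^ θ) := by
        refine ENNReal.tsum_le_tsum fun j => ?_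
        rw [← ENNReal.ofReal_mul hC.le]
        exact ENNReal.ofReal_le_ofReal (hcost _ (hc j).1)
    _ = ENNReal.ofReal C * ∑' j, ENNReal.ofReal ((c j).2 ^ θ) := ENNReal.tsum_mul_left

theorem mH_le_ofReal_mul_mH {r : ℝ → ℝ} (hC : 0 < C)
    (hsub : ∀ x ρ, 0 < ρ → ∃ x', G x ρ ⊆ F x' (r ρ))
    (hr : Tendsto r (𝓝[>] 0) (𝓝[>] 0)) (hcost : ∀ ρ, 0 < ρ → r ρ ^ η ≤ C * ρ ^ θ) :
    mH F η A ≤ ENNReal.ofReal C * mH G θ A := by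
  refine iSup₂_le fun δ' hδ' => ?_
  obtain ⟨δ, hδ, hrδ⟩ := mem_nhdsGT_iff_exists_Ioo_subset.1 (hr (Ioo_mem_nhdsGT hδ'))
  calc mdel F η δ' A ≤ ENNReal.ofReal C * mdel G θ δ A :=
        mdel_le_ofReal_mul_mdel hC hsub hrδ hcost
    _ ≤ ENNReal.ofReal C * mH G θ A := by
        gcongr
        exact le_iSup₂ (f := fun d (_ : 0 < d) => mdel G θ d A) δ hδ

end Comparison

theorem tendsto_const_mul_rpow_nhdsGT_zero {a p : ℝ} (ha : 0 < a) (hp : 0 < p) :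
    Tendsto (fun ρ => a * ρ ^ p) (𝓝[>] 0) (𝓝[>] 0) := by
  refine tendsto_nhdsWithin_iff.2 ⟨?_, eventually_mem_nhdsWithin.mono fun ρ hρ => ?_⟩
  · have := ((continuous_const (y := a)).mul (Real.continuous_rpow_const hp.le)).tendsto' 0 0
      (by simp [Real.zero_rpow hp.ne'])
    exact this.mono_left nhdsWithin_le_nhds
  · exact mul_pos ha (Real.rpow_pos_of_pos hρ p)

theorem log_le_div_exp_one {x : ℝ} (hx : 0 < x) : Real.log x ≤ x / Real.exp 1 := by
  have h := Real.log_le_sub_one_of_pos (div_pos hx (Real.exp_pos 1))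
  rw [Real.log_div hx.ne' (Real.exp_pos 1).ne', Real.log_exp] at h
  linarith

theorem exp_quarter_lt : Real.exp (1 / 4) < 4 / 3 := by
  have h : Real.exp (1 / 4) ^ 4 < (4 / 3) ^ 4 := by
    rw [← Real.exp_nat_mul]
    norm_num
    linarith [Real.exp_one_lt_d9]
  exact lt_of_pow_lt_pow_left₀ 4 (by norm_num) h

theorem bounds_of_rpow_neg_lt_G0 {n : ℕ} (hn : 0 < n) {z : EuclideanSpace ℝ (Fin n)} {t c : ℝ}
    (hc : 0 < c) (h : c ^ (-(n : ℝ) / 2) < G0 n z t) : 0 < t ∧ t < c ∧ ‖z‖ ^ 2 ≤ n * c := by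
  have ht : 0 < t := by
    by_contra ht
    rw [G0, if_neg ht] at h
    exact (Real.rpow_pos_of_pos hc _).not_gt h
  rw [G0, if_pos ht] at h
  have hn' : (0 : ℝ) < n := Nat.cast_pos.2 hn
  have htc : t < c := by
    refine (Real.rpow_lt_rpow_iff_of_neg hc ht (by linarith)).1 (h.trans_le ?_)
    refine mul_le_of_le_one_right (by positivity) (Real.exp_le_one_iff.2 ?_)
    exact div_nonpos_of_nonpos_of_nonneg (neg_nonpos.2 (by positivity)) (by positivity)
  have hlog : ‖z‖ ^ 2 / (4 * t) < n / 2 * Real.log (c / t) := by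
    have := Real.log_lt_log (by positivity) h
    rw [Real.log_mul (by positivity) (Real.exp_pos _).ne', Real.log_exp, Real.log_rpow hc,
      Real.log_rpow ht, neg_div (4 * t)] at this
    rw [Real.log_div hc.ne' ht.ne']
    linarith
  refine ⟨ht, htc, ?_⟩
  calc ‖z‖ ^ 2 ≤ 2 * n * t * Real.log (c / t) := by
        rw [div_lt_iff₀ (by positivity)] at hlog
        linarith
    _ ≤ 2 * n * t * (c / t / Real.exp 1) := by
        gcongr
        exact log_le_div_exp_one (div_pos hc ht)
    _ = 2 / Real.exp 1 * (n * c) := by field_simp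
    _ ≤ n * c := by
        refine mul_le_of_le_one_left (by positivity) ?_
        rw [div_le_one (Real.exp_pos 1)]
        linarith [Real.add_one_le_exp 1]

theorem rpow_neg_lt_G0_of_bounds {n : ℕ} (hn : 0 < n) {z : EuclideanSpace ℝ (Fin n)}
    {t ρ : ℝ} (hρ : 0 < ρ) (hz : ∀ i, |z i| ≤ ρ / 2) (ht₁ : ρ ^ 2 / 2 ≤ t)
    (ht₂ : t ≤ 3 * ρ ^ 2 / 2) : (2 * ρ ^ 2) ^ (-(n : ℝ) / 2) < G0 n z t := by
  have ht : 0 < t := lt_of_lt_of_le (by positivity) ht₁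
  have hn' : (0 : ℝ) < n := Nat.cast_pos.2 hn
  have hz₂ : ‖z‖ ^ 2 ≤ n * ρ ^ 2 / 4 := by
    rw [EuclideanSpace.norm_sq_eq]
    calc ∑ i, ‖z i‖ ^ 2 ≤ ∑ _i : Fin n, (ρ / 2) ^ 2 :=
          Finset.sum_le_sum fun i _ => pow_le_pow_left₀ (norm_nonneg _) (hz i) 2
      _ = n * ρ ^ 2 / 4 := by
          rw [Finset.sum_const, Finset.card_univ, Fintype.card_fin, nsmul_eq_mul]
          ring
  have hexp : Real.exp (1 / 4) ^ (-(n : ℝ) / 2) ≤ Real.exp (-‖z‖ ^ 2 / (4 * t)) := by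
    rw [← Real.exp_mul, Real.exp_le_exp, le_div_iff₀ (by positivity)]
    nlinarith
  calc (2 * ρ ^ 2) ^ (-(n : ℝ) / 2) < (t * Real.exp (1 / 4)) ^ (-(n : ℝ) / 2) := by
        refine Real.rpow_lt_rpow_of_neg (by positivity) ?_ (by linarith)
        nlinarith [exp_quarter_lt, Real.exp_pos (1 / 4)]
    _ ≤ t ^ (-(n : ℝ) / 2) * Real.exp (-‖z‖ ^ 2 / (4 * t)) := by
        rw [Real.mul_rpow ht.le (Real.exp_pos _).le]
        gcongr
    _ = G0 n z t := by rw [G0, if_pos ht]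

theorem heatBall_subset_parBox {n : ℕ} (hn : 0 < n) (x : EuclideanSpace ℝ (Fin n) × ℝ) {ρ : ℝ}
    (hρ : 0 < ρ) : heatBall n x ρ ⊆ parBox n x (2 * Real.sqrt n * ρ ^ ((1 : ℝ) / n)) := by
  intro y hy
  have hn' : (0 : ℝ) < n := Nat.cast_pos.2 hn
  set c := ρ ^ ((2 : ℝ) / n)
  have hc : c ^ (-(n : ℝ) / 2) = 1 / ρ := by
    rw [← Real.rpow_mul hρ.le, show (2 : ℝ) / n * (-(n : ℝ) / 2) = -1 by field_simp,
      Real.rpow_neg_one, one_div]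
  obtain ⟨ht, htc, hz⟩ := bounds_of_rpow_neg_lt_G0 hn (Real.rpow_pos_of_pos hρ _)
    (hc ▸ hy : c ^ (-(n : ℝ) / 2) < G0 n (x.1 - y.1) (x.2 - y.2))
  have hsqrt : Real.sqrt (n * c) = Real.sqrt n * ρ ^ ((1 : ℝ) / n) := by
    rw [Real.sqrt_mul hn'.le, Real.sqrt_eq_rpow c, ← Real.rpow_mul hρ.le,
      show (2 : ℝ) / n * (1 / 2) = 1 / n by field_simp]
  have hsq : (2 * Real.sqrt n * ρ ^ ((1 : ℝ) / n)) ^ 2 = 4 * n * c := by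
    rw [mul_pow, mul_pow, Real.sq_sqrt hn'.le, ← Real.rpow_natCast (ρ ^ _) 2, ← Real.rpow_mul hρ.le,
      show (1 : ℝ) / n * (2 : ℕ) = 2 / n by push_cast; ring]
    ring
  refine ⟨fun i => ?_, ?_⟩
  · calc |y.1 i - x.1 i| = ‖(x.1 - y.1) i‖ := by
          rw [Real.norm_eq_abs, abs_sub_comm]; rfl
      _ ≤ ‖x.1 - y.1‖ := PiLp.norm_apply_le _ i
      _ ≤ Real.sqrt (n * c) := Real.le_sqrt_of_sq_le hz
      _ = 2 * Real.sqrt n * ρ ^ ((1 : ℝ) / n) / 2 := by rw [hsqrt]; ring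
  · rw [abs_sub_comm, abs_of_pos ht, hsq]
    nlinarith [show (1 : ℝ) ≤ n from Nat.one_le_cast.2 hn]

theorem parBox_subset_heatBall {n : ℕ} (hn : 0 < n) (x : EuclideanSpace ℝ (Fin n) × ℝ) {ρ : ℝ}
    (hρ : 0 < ρ) :
    parBox n x ρ ⊆ heatBall n (x.1, x.2 + ρ ^ 2) (2 ^ ((n : ℝ) / 2) * ρ ^ (n : ℝ)) := by
  rintro y ⟨hy₁, hy₂⟩
  have h2ρ : 1 / (2 ^ ((n : ℝ) / 2) * ρ ^ (n : ℝ)) = (2 * ρ ^ 2) ^ (-(n : ℝ) / 2) := by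
    rw [neg_div, Real.rpow_neg (by positivity), Real.mul_rpow (by norm_num) (by positivity),
      ← Real.rpow_natCast ρ 2, ← Real.rpow_mul hρ.le, one_div]
    push_cast
    ring_nf
  show 1 / (2 ^ ((n : ℝ) / 2) * ρ ^ (n : ℝ)) < G0 n (x.1 - y.1) (x.2 + ρ ^ 2 - y.2)
  rw [h2ρ]
  obtain ⟨ht₁, ht₂⟩ := abs_le.1 hy₂
  refine rpow_neg_lt_G0_of_bounds hn hρ (fun i => ?_) (by linarith) (by linarith)
  simpa [abs_sub_comm] using hy₁ i

/-- Proposition 5.3: `m_{n,P}(A) ≤ 2ⁿ n^{n/2} m_G(A)` and `m_G(A) ≤ 2^{n/2} m_{n,P}(A)`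
for every `A ⊆ ℝ^{n+1}`. -/
theorem stmt_17 (n : ℕ) (hn : 1 ≤ n) (A : Set (EuclideanSpace ℝ (Fin n) × ℝ)) :
    mH (parBox n) (n : ℝ) A ≤
        ENNReal.ofReal (2 ^ n * (n : ℝ) ^ ((n : ℝ) / 2)) * mH (heatBall n) 1 A ∧
      mH (heatBall n) 1 A ≤
        ENNReal.ofReal ((2 : ℝ) ^ ((n : ℝ) / 2)) * mH (parBox n) (n : ℝ) A := by
  have hn' : (0 : ℝ) < n := Nat.cast_pos.2 hn
  constructor
  · refine mH_le_ofReal_mul_mH (r := fun ρ => 2 * Real.sqrt n * ρ ^ ((1 : ℝ) / n))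
      (by positivity) (fun x ρ hρ => ⟨x, heatBall_subset_parBox hn x hρ⟩)
      (tendsto_const_mul_rpow_nhdsGT_zero (by positivity) (by positivity)) fun ρ hρ => ?_
    rw [Real.mul_rpow (by positivity) (by positivity), Real.mul_rpow (by norm_num) (by positivity),
      Real.sqrt_eq_rpow, ← Real.rpow_mul hn'.le, ← Real.rpow_mul hρ.le, Real.rpow_natCast,
      one_div_mul_cancel hn'.ne', Real.rpow_one, one_div_mul_eq_div]
  · refine mH_le_ofReal_mul_mH (r := fun ρ => 2 ^ ((n : ℝ) / 2) * ρ ^ (n : ℝ)) (by positivity)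
      (fun x ρ hρ => ⟨_, parBox_subset_heatBall hn x hρ⟩)
      (tendsto_const_mul_rpow_nhdsGT_zero (by positivity) hn') fun ρ _ => ?_
    rw [Real.rpow_one]
end

section
/- Let X be a locally compact space with countable base and let G : X × X → [0,∞] satisfy: (i) G(·,y) is lower semicontinuous with limsup_{x→y} G(x,y) = ∞ for each y; (ii) G is continuous off the diagonal and Borel measurable; (iii) for every compact K ⊆ X there is a compact L ⊆ X with G bounded on (X∖L) × K. If A ⊆ X satisfies m_G(A) < ∞, then A is contained in a G-semipolar Borel set. -/
/-!
Cover `A`, for every `n`, by `G`-balls of radii `< 1/(n+1)` and total radius `< m_G(A) + 1`;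
the intersection over `n` of these unions is a Borel set `B ⊇ A` with `m_G(B) < ∞`.
Let `μ` be carried by `B` with `Gμ` finite and continuous. As `limsup_{x→y} G(x,y) = ∞`,
`μ` has no atoms, and Fatou's lemma together with the continuity of `G` off the diagonal
gives `∫_{B(x,ρ)} G(x,·) dμ → 0` as `ρ → 0`, uniformly for `x` in a compact set `L`.
For compact `K` and `L` as in (iii), small balls meeting `K` are centred in `L`, and
`μ(B(x,ρ)) ≤ ρ ∫_{B(x,ρ)} G(x,·) dμ`; summing over a fine cover of `B` gives
`μ(K) ≤ (m_G(B) + 1) ε` for every `ε > 0`. So every compact set is `μ`-null and `μ = 0`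
by inner regularity.
-/

open MeasureTheory Filter
open scoped ENNReal Topology

/-- The `G`-ball `B(x,ρ) = {y : G(x,y) > 1/ρ}`. -/
def Gball {X : Type*} (G : X → X → ℝ≥0∞) (x : X) (ρ : ℝ) : Set X :=
  {y | (ENNReal.ofReal ρ)⁻¹ < G x y}

/-- The intrinsic Hausdorff measure `m_G`. -/
noncomputable def mG {X : Type*} (G : X → X → ℝ≥0∞) (A : Set X) : ℝ≥0∞ :=
  ⨆ (δ : ℝ) (_ : 0 < δ),
    ⨅ (c : ℕ → X × ℝ) (_ : A ⊆ ⋃ j, Gball G (c j).1 (c j).2)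
      (_ : ∀ j, 0 < (c j).2 ∧ (c j).2 < δ), ∑' j, ENNReal.ofReal (c j).2

/-- A Borel set `A` is `G`-semipolar if there is no nonzero (positive Radon) measure `μ`
with `μ(X \ A) = 0` such that `Gμ := ∫ G(·,y) dμ(y)` is a continuous real function. -/
def GSemipolar {X : Type*} [TopologicalSpace X] [MeasurableSpace X]
    (G : X → X → ℝ≥0∞) (A : Set X) : Prop :=
  ¬ ∃ μ : Measure X, μ ≠ 0 ∧ μ.Regular ∧ μ Aᶜ = 0 ∧
      (∀ x, ∫⁻ y, G x y ∂μ ≠ ⊤) ∧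
      Continuous (fun x => (∫⁻ y, G x y ∂μ).toReal)

section

variable {X : Type*} {G : X → X → ℝ≥0∞}

theorem exists_gball_cover_of_mG_lt {A : Set X} {b : ℝ≥0∞} (hA : mG G A < b) {δ : ℝ}
    (hδ : 0 < δ) :
    ∃ c : ℕ → X × ℝ, A ⊆ ⋃ j, Gball G (c j).1 (c j).2 ∧
      (∀ j, 0 < (c j).2 ∧ (c j).2 < δ) ∧ ∑' j, ENNReal.ofReal (c j).2 < b := by
  rw [mG] at hA
  simpa only [iInf_lt_iff, exists_prop] using (le_iSup₂ δ hδ).trans_lt hA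

theorem mG_le_of_forall_cover {A : Set X} {b : ℝ≥0∞}
    (h : ∀ δ : ℝ, 0 < δ → ∃ c : ℕ → X × ℝ, A ⊆ ⋃ j, Gball G (c j).1 (c j).2 ∧
      (∀ j, 0 < (c j).2 ∧ (c j).2 < δ) ∧ ∑' j, ENNReal.ofReal (c j).2 ≤ b) :
    mG G A ≤ b := by
  refine iSup₂_le fun δ hδ => ?_
  obtain ⟨c, hcA, hc, hsum⟩ := h δ hδ
  exact iInf₂_le_of_le c hcA (iInf_le_of_le hc hsum)

theorem disjoint_gball {K : Set X} {x : X} {a : ℝ≥0∞} (hK : ∀ y ∈ K, G x y ≤ a) {ρ : ℝ}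
    (hρ : ENNReal.ofReal ρ ≤ a⁻¹) : Disjoint K (Gball G x ρ) :=
  Set.disjoint_left.2 fun y hyK hyB =>
    (ENNReal.le_inv_iff_le_inv.1 hρ).not_gt (hyB.trans_le (hK y hyK))

variable [MeasurableSpace X]

theorem measurableSet_gball (hG : ∀ x, Measurable (G x)) (x : X) (ρ : ℝ) :
    MeasurableSet (Gball G x ρ) :=
  measurableSet_lt measurable_const (hG x)

theorem exists_measurableSet_superset_mG_lt_top (hG : ∀ x, Measurable (G x)) {A : Set X}
    (hA : mG G A < ⊤) : ∃ B, A ⊆ B ∧ MeasurableSet B ∧ mG G B < ⊤ := by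
  have hlt : mG G A < mG G A + 1 := ENNReal.lt_add_right hA.ne one_ne_zero
  choose c hcA hc hsum using fun n : ℕ =>
    exists_gball_cover_of_mG_lt hlt (Nat.one_div_pos_of_nat (n := n))
  refine ⟨⋂ n, ⋃ j, Gball G (c n j).1 (c n j).2, Set.subset_iInter hcA,
    .iInter fun n => .iUnion fun j => measurableSet_gball hG _ _, ?_⟩
  refine (mG_le_of_forall_cover fun δ hδ => ?_).trans_lt
    (ENNReal.add_lt_top.2 ⟨hA, ENNReal.one_lt_top⟩)
  obtain ⟨n, hn⟩ := exists_nat_one_div_lt hδ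
  exact ⟨c n, Set.iInter_subset _ n, fun j => ⟨(hc n j).1, (hc n j).2.trans hn⟩,
    (hsum n).le⟩

variable {μ : Measure X}

theorem measure_gball_le_mul_setLIntegral (hG : ∀ x, Measurable (G x)) (x : X) (ρ : ℝ) :
    μ (Gball G x ρ) ≤ ENNReal.ofReal ρ * ∫⁻ y in Gball G x ρ, G x y ∂μ := by
  have hone : ∀ y ∈ Gball G x ρ, 1 ≤ ENNReal.ofReal ρ * G x y := fun y hy =>
    (ENNReal.inv_le_iff_le_mul (fun _ h => by simp [Gball, h] at hy)
      (fun h => (ENNReal.ofReal_ne_top h).elim)).1 hy.le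
  calc μ (Gball G x ρ) = ∫⁻ _ in Gball G x ρ, 1 ∂μ := (setLIntegral_one _).symm
    _ ≤ ∫⁻ y in Gball G x ρ, ENNReal.ofReal ρ * G x y ∂μ :=
      setLIntegral_mono' (measurableSet_gball hG x ρ) hone
    _ = ENNReal.ofReal ρ * ∫⁻ y in Gball G x ρ, G x y ∂μ := lintegral_const_mul _ (hG x)

theorem measure_singleton_eq_zero_of_limsup_eq_top [TopologicalSpace X]
    (hG : ∀ x, Measurable (G x)) {x : X} (hx : limsup (fun z => G z x) (𝓝[≠] x) = ⊤)
    (hμx : μ {x} ≠ ⊤) (hu : ContinuousAt (fun z => ∫⁻ y, G z y ∂μ) x)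
    (hux : ∫⁻ y, G x y ∂μ ≠ ⊤) : μ {x} = 0 := by
  by_contra h0
  have hlow : ∀ z, G z x * μ {x} ≤ ∫⁻ y, G z y ∂μ := fun z =>
    (lintegral_singleton' (hG z) x).symm.trans_le (setLIntegral_le_lintegral _ _)
  have hev : ∀ᶠ z in 𝓝[≠] x, G z x ≤ (∫⁻ y, G x y ∂μ + 1) / μ {x} := by
    filter_upwards [nhdsWithin_le_nhds
      (hu.eventually_lt_const (ENNReal.lt_add_right hux one_ne_zero))] with z hz
    exact (ENNReal.le_div_iff_mul_le (.inl h0) (.inl hμx)).2 ((hlow z).trans hz.le)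
  have hle := limsup_le_of_le (by isBoundedDefault) hev
  rw [hx, top_le_iff] at hle
  exact (ENNReal.div_lt_top (ENNReal.add_ne_top.2 ⟨hux, ENNReal.one_ne_top⟩) h0).ne hle

theorem lintegral_add_le_liminf_of_le_setLIntegral_gball [TopologicalSpace X] [T2Space X]
    (hG : ∀ x, Measurable (G x))
    (hcont : ContinuousOn (fun q : X × X => G q.1 q.2) {q | q.1 ≠ q.2}) {x : X}
    (hx : μ {x} = 0) (hux : ∫⁻ y, G x y ∂μ ≠ ⊤) {w : ℕ → X} (hw : Tendsto w atTop (𝓝 x))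
    {s : ℕ → ℝ} (hs : Tendsto (fun k => ENNReal.ofReal (s k)) atTop (𝓝 0)) {ε : ℝ≥0∞}
    (hε : ∀ k, ε ≤ ∫⁻ y in Gball G (w k) (s k), G (w k) y ∂μ) :
    ∫⁻ y, G x y ∂μ + ε ≤ liminf (fun k => ∫⁻ y, G (w k) y ∂μ) atTop := by
  set T := fun k => Gball G (w k) (s k)
  have hT : ∀ k, MeasurableSet (T k) := fun k => measurableSet_gball hG _ _
  have hinv : Tendsto (fun k => (ENNReal.ofReal (s k))⁻¹) atTop (𝓝 ⊤) := by
    simpa using tendsto_inv_iff.2 hs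
  have hae : ∀ᵐ y ∂μ, G x y ≤ liminf (fun k => (T k)ᶜ.indicator (G (w k)) y) atTop := by
    filter_upwards [compl_mem_ae_iff.2 hx, ae_lt_top (hG x) hux] with y hyx hy
    have hconv : Tendsto (fun k => G (w k) y) atTop (𝓝 (G x y)) :=
      (hcont.continuousAt (isClosed_diagonal.isOpen_compl.mem_nhds
        (show (x, y) ∈ (Set.diagonal X)ᶜ from fun h => hyx h.symm))).tendsto.comp
        (hw.prodMk_nhds tendsto_const_nhds)
    -- `G (w k) y` stays bounded while the thresholds `1 / s k` blow up
    have hout : ∀ᶠ k in atTop, y ∈ (T k)ᶜ :=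
      (hconv.eventually_lt hinv hy).mono fun k hk => not_lt.2 hk.le
    rw [liminf_congr (hout.mono fun k hk => Set.indicator_of_mem hk _), hconv.liminf_eq]
  calc ∫⁻ y, G x y ∂μ + ε
      ≤ ∫⁻ y, liminf (fun k => (T k)ᶜ.indicator (G (w k)) y) atTop ∂μ + ε :=
        add_le_add (lintegral_mono_ae hae) le_rfl
    _ ≤ liminf (fun k => ∫⁻ y, (T k)ᶜ.indicator (G (w k)) y ∂μ) atTop + ε :=
        add_le_add (lintegral_liminf_le fun k => (hG _).indicator (hT k).compl) le_rfl
    _ = liminf (fun k => ∫⁻ y, (T k)ᶜ.indicator (G (w k)) y ∂μ + ε) atTop :=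
        (liminf_add_const _ _ _ (by isBoundedDefault) (by isBoundedDefault)).symm
    _ ≤ liminf (fun k => ∫⁻ y, G (w k) y ∂μ) atTop := by
        refine liminf_le_liminf (Eventually.of_forall fun k => ?_)
        rw [lintegral_indicator (hT k).compl]
        calc _ ≤ ∫⁻ y in (T k)ᶜ, G (w k) y ∂μ + ∫⁻ y in T k, G (w k) y ∂μ :=
              add_le_add le_rfl (hε k)
          _ = ∫⁻ y, G (w k) y ∂μ := by rw [add_comm, lintegral_add_compl _ (hT k)]

theorem exists_forall_setLIntegral_gball_le [TopologicalSpace X] [T2Space X]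
    [FirstCountableTopology X] (hG : ∀ x, Measurable (G x))
    (hcont : ContinuousOn (fun q : X × X => G q.1 q.2) {q | q.1 ≠ q.2})
    {L : Set X} (hL : IsCompact L) (hatom : ∀ x ∈ L, μ {x} = 0)
    (hfin : ∀ x, ∫⁻ y, G x y ∂μ ≠ ⊤) (hu : Continuous fun x => ∫⁻ y, G x y ∂μ)
    {ε : ℝ≥0∞} (hε : ε ≠ 0) :
    ∃ δ > 0, ∀ x ∈ L, ∀ ρ < δ, ∫⁻ y in Gball G x ρ, G x y ∂μ ≤ ε := by
  by_contra! h
  choose w hwL s hs hεs using fun n : ℕ => h (1 / (n + 1)) Nat.one_div_pos_of_nat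
  obtain ⟨x, hxL, φ, hφ, hwx⟩ := hL.tendsto_subseq hwL
  have hs0 : Tendsto (fun k => ENNReal.ofReal (s k)) atTop (𝓝 0) :=
    tendsto_of_tendsto_of_tendsto_of_le_of_le tendsto_const_nhds
      (by simpa using ENNReal.tendsto_ofReal tendsto_one_div_add_atTop_nhds_zero_nat)
      (fun _ => zero_le) fun k => ENNReal.ofReal_le_ofReal (hs k).le
  have key := lintegral_add_le_liminf_of_le_setLIntegral_gball hG hcont (hatom x hxL) (hfin x) hwx
    (hs0.comp hφ.tendsto_atTop) fun k => (hεs (φ k)).le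
  have hlim : Tendsto (fun k => ∫⁻ y, G ((w ∘ φ) k) y ∂μ) atTop (𝓝 (∫⁻ y, G x y ∂μ)) :=
    (hu.tendsto x).comp hwx
  rw [hlim.liminf_eq] at key
  exact hε (nonpos_iff_eq_zero.1
    (ENNReal.le_of_add_le_add_left (hfin x) (by simpa only [add_zero] using key)))

theorem measure_le_mul_of_forall_setLIntegral_gball_le (hG : ∀ x, Measurable (G x))
    {B : Set X} {S : ℝ≥0∞} (hB : mG G B < S) (hμB : μ Bᶜ = 0) {K L : Set X} {a : ℝ≥0∞}
    (ha : a ≠ ⊤) (hKL : ∀ x ∉ L, ∀ y ∈ K, G x y ≤ a) {ε : ℝ≥0∞} {δ : ℝ} (hδ : 0 < δ)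
    (hsmall : ∀ x ∈ L, ∀ ρ < δ, ∫⁻ y in Gball G x ρ, G x y ∂μ ≤ ε) : μ K ≤ S * ε := by
  obtain ⟨r, -, hr, hra⟩ := ENNReal.lt_iff_exists_real_btwn.1 (ENNReal.inv_pos.2 ha)
  obtain ⟨c, hcB, hc, hsum⟩ :=
    exists_gball_cover_of_mG_lt hB (lt_min hδ (ENNReal.ofReal_pos.1 hr))
  have hball : ∀ j, μ (K ∩ Gball G (c j).1 (c j).2) ≤ ENNReal.ofReal (c j).2 * ε := by
    intro j
    by_cases hj : (c j).1 ∈ L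
    · calc μ (K ∩ Gball G (c j).1 (c j).2) ≤ μ (Gball G (c j).1 (c j).2) :=
            measure_mono Set.inter_subset_right
        _ ≤ ENNReal.ofReal (c j).2 * ∫⁻ y in Gball G (c j).1 (c j).2, G (c j).1 y ∂μ :=
            measure_gball_le_mul_setLIntegral hG _ _
        _ ≤ ENNReal.ofReal (c j).2 * ε :=
            mul_le_mul_right (hsmall _ hj _ ((hc j).2.trans_le (min_le_left _ _))) _
    · have hρ : ENNReal.ofReal (c j).2 ≤ a⁻¹ :=
        (ENNReal.ofReal_le_ofReal ((hc j).2.trans_le (min_le_right _ _)).le).trans hra.le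
      rw [(disjoint_gball (hKL _ hj) hρ).inter_eq, measure_empty]
      exact zero_le
  calc μ K = μ (K ∩ B) := (measure_inter_conull hμB).symm
    _ ≤ μ (⋃ j, K ∩ Gball G (c j).1 (c j).2) := by
        rw [← Set.inter_iUnion]
        exact measure_mono (Set.inter_subset_inter_right K hcB)
    _ ≤ ∑' j, μ (K ∩ Gball G (c j).1 (c j).2) := measure_iUnion_le _
    _ ≤ ∑' j, ENNReal.ofReal (c j).2 * ε := ENNReal.tsum_le_tsum hball
    _ = (∑' j, ENNReal.ofReal (c j).2) * ε := ENNReal.tsum_mul_right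
    _ ≤ S * ε := mul_le_mul_left hsum.le _

theorem measure_eq_zero_of_mG_lt_top [TopologicalSpace X] [T2Space X]
    [FirstCountableTopology X] (hG : ∀ x, Measurable (G x))
    (hcont : ContinuousOn (fun q : X × X => G q.1 q.2) {q | q.1 ≠ q.2})
    {B : Set X} (hB : mG G B < ⊤) (hμB : μ Bᶜ = 0) {K L : Set X} (hL : IsCompact L)
    {a : ℝ≥0∞} (ha : a ≠ ⊤) (hKL : ∀ x ∉ L, ∀ y ∈ K, G x y ≤ a)
    (hatom : ∀ x ∈ L, μ {x} = 0) (hfin : ∀ x, ∫⁻ y, G x y ∂μ ≠ ⊤)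
    (hu : Continuous fun x => ∫⁻ y, G x y ∂μ) : μ K = 0 := by
  by_contra hK
  obtain ⟨ε, hε, hεK⟩ := ENNReal.exists_pos_mul_lt
    (ENNReal.add_ne_top.2 ⟨hB.ne, ENNReal.one_ne_top⟩) hK
  obtain ⟨δ, hδ, hsmall⟩ := exists_forall_setLIntegral_gball_le hG hcont hL hatom hfin hu hε.ne'
  have hle := measure_le_mul_of_forall_setLIntegral_gball_le hG
    (ENNReal.lt_add_right hB.ne one_ne_zero) hμB ha hKL hδ hsmall
  exact hle.not_gt (by rwa [mul_comm])

theorem gSemipolar_of_mG_lt_top [TopologicalSpace X] [T2Space X] [FirstCountableTopology X]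
    (hG : ∀ x, Measurable (G x)) (hlimsup : ∀ y, limsup (fun x => G x y) (𝓝[≠] y) = ⊤)
    (hcont : ContinuousOn (fun q : X × X => G q.1 q.2) {q | q.1 ≠ q.2})
    (hbd : ∀ K : Set X, IsCompact K → ∃ L : Set X, IsCompact L ∧
      ∃ a : ℝ≥0∞, a ≠ ⊤ ∧ ∀ x ∉ L, ∀ y ∈ K, G x y ≤ a)
    {B : Set X} (hB : mG G B < ⊤) : GSemipolar G B := by
  rintro ⟨μ, hμ0, hreg, hμB, hfin, hcont'⟩
  have hu : Continuous fun x => ∫⁻ y, G x y ∂μ := by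
    simpa only [Function.comp_def, ENNReal.ofReal_toReal (hfin _)] using
      ENNReal.continuous_ofReal.comp hcont'
  have hatom : ∀ x, μ {x} = 0 := fun x => measure_singleton_eq_zero_of_limsup_eq_top hG
    (hlimsup x) isCompact_singleton.measure_lt_top.ne hu.continuousAt (hfin x)
  have hcompact : ∀ K, IsCompact K → μ K = 0 := fun K hK => by
    obtain ⟨L, hL, a, ha, hKL⟩ := hbd K hK
    exact measure_eq_zero_of_mG_lt_top hG hcont hB hμB hL ha hKL (fun x _ => hatom x) hfin hu
  obtain ⟨K, -, hK, hpos⟩ := isOpen_univ.exists_lt_isCompact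
    (pos_iff_ne_zero.2 (Measure.measure_univ_ne_zero.2 hμ0))
  exact hpos.ne' (hcompact K hK)

end

theorem stmt_19_general {X : Type*} [TopologicalSpace X]
    [SecondCountableTopology X] [T2Space X] [MeasurableSpace X]
    (G : X → X → ℝ≥0∞)
    -- (i): `G(·,y)` is lower semicontinuous and `limsup_{x→y} G(x,y) = ∞`
    (hlimsup : ∀ y, limsup (fun x => G x y) (𝓝[≠] y) = ⊤)
    -- (ii): `G` is continuous outside the diagonal and Borel measurable
    (hcont : ContinuousOn (fun q : X × X => G q.1 q.2) {q | q.1 ≠ q.2})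
    (hmeas : Measurable fun q : X × X => G q.1 q.2)
    -- (iii): for every compact `K` there is a compact `L` with `G` bounded on `(X∖L)×K`
    (hbd : ∀ K : Set X, IsCompact K → ∃ L : Set X, IsCompact L ∧
      ∃ a : ℝ≥0∞, a ≠ ⊤ ∧ ∀ x ∉ L, ∀ y ∈ K, G x y ≤ a)
    (A : Set X) (hA : mG G A < ⊤) :
    ∃ B : Set X, A ⊆ B ∧ MeasurableSet B ∧ GSemipolar G B := by
  have hG : ∀ x, Measurable (G x) := fun x => hmeas.comp measurable_prodMk_left
  obtain ⟨B, hAB, hBm, hB⟩ := exists_measurableSet_superset_mG_lt_top hG hA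
  exact ⟨B, hAB, hBm, gSemipolar_of_mG_lt_top hG hlimsup hcont hbd hB⟩

/-- Theorem 3.3 (main result): under the regularity assumptions (i)–(iii) on `G`,
every set `A` with `m_G(A) < ∞` is contained in a `G`-semipolar Borel set. -/
theorem stmt_19 {X : Type*} [TopologicalSpace X] [LocallyCompactSpace X]
    [SecondCountableTopology X] [T2Space X] [MeasurableSpace X] [BorelSpace X]
    (G : X → X → ℝ≥0∞)
    -- (i): `G(·,y)` is lower semicontinuous and `limsup_{x→y} G(x,y) = ∞`
    (hlsc : ∀ y, LowerSemicontinuous fun x => G x y)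
    (hlimsup : ∀ y, limsup (fun x => G x y) (𝓝[≠] y) = ⊤)
    -- (ii): `G` is continuous outside the diagonal and Borel measurable
    (hcont : ContinuousOn (fun q : X × X => G q.1 q.2) {q | q.1 ≠ q.2})
    (hmeas : Measurable fun q : X × X => G q.1 q.2)
    -- (iii): for every compact `K` there is a compact `L` with `G` bounded on `(X∖L)×K`
    (hbd : ∀ K : Set X, IsCompact K → ∃ L : Set X, IsCompact L ∧
      ∃ a : ℝ≥0∞, a ≠ ⊤ ∧ ∀ x ∉ L, ∀ y ∈ K, G x y ≤ a)
    (A : Set X) (hA : mG G A < ⊤) :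
    ∃ B : Set X, A ⊆ B ∧ MeasurableSet B ∧ GSemipolar G B :=
  stmt_19_general G hlimsup hcont hmeas hbd A hA
end
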